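/- Let d ∈ ℂ, let U ⊆ ℂ be open and let q : U → ℂ be complex differentiable. Set ω(t,z) = z² + (t/2)z + d/2, τ(t,z) = (2z + 2q(t) + t)/4, and define the 2×2 matrices A(t,z) = ((ω, 0), (z² − qz, −ω)) and B(t,z) = ((τ, 0), (z/2, −τ)). Then the Lax equation ∂A/∂t (t,z) = z·∂B/∂z (t,z) + A(t,z)B(t,z) − B(t,z)A(t,z) holds for all t ∈ U and all z ∈ ℂ if and only if q satisfies the Riccati equation q' = q² + (t/2)q + (d−1)/2 on U. -/
import Mathlib


open Matrix

/-- The matrix `A(t,z) = ((ω,0),(z²−qz,−ω))` with `ω = z² + (t/2)z + d/2`. -/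
noncomputable def RicA (d : ℂ) (q : ℂ → ℂ) (t z : ℂ) : Matrix (Fin 2) (Fin 2) ℂ :=
  !![z ^ 2 + (t/2) * z + d/2, 0;
     z ^ 2 - q t * z, -(z ^ 2 + (t/2) * z + d/2)]

/-- The matrix `B(t,z) = ((τ,0),(z/2,−τ))` with `τ = (2z + 2q(t) + t)/4`. -/
noncomputable def RicB (q : ℂ → ℂ) (t z : ℂ) : Matrix (Fin 2) (Fin 2) ℂ :=
  !![(2 * z + 2 * q t + t) / 4, 0;
     z / 2, -((2 * z + 2 * q t + t) / 4)]

/-- The Lax equation `∂A/∂t = z·∂B/∂z + [A,B]` holds for all `t ∈ U`, `z ∈ ℂ`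
if and only if `q` satisfies the Riccati equation `q' = q² + (t/2)q + (d−1)/2` on `U`. -/
theorem stmt_3 (d : ℂ) (U : Set ℂ) (hU : IsOpen U) (q : ℂ → ℂ)
    (hq : ∀ t ∈ U, DifferentiableAt ℂ q t) :
    (∀ t ∈ U, ∀ z : ℂ, ∀ i j : Fin 2,
        deriv (fun s => RicA d q s z i j) t =
          z * deriv (fun w => RicB q t w i j) z +
            (RicA d q t z * RicB q t z - RicB q t z * RicA d q t z) i j) ↔
    (∀ t ∈ U, deriv q t = (q t) ^ 2 + (t/2) * q t + (d - 1) / 2) := by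
  constructor
  · intro h t ht
    have hqt := hq t ht
    have h10 := h t ht 1 1 0
    have hA10 : deriv (fun s => (1:ℂ) - q s) t = -deriv q t := by
      simpa using ((hasDerivAt_const t (1:ℂ)).sub hqt.hasDerivAt).deriv
    simp only [RicA, RicB, Matrix.mul_apply, Fin.sum_univ_two] at h10
    simp [hA10] at h10
    linear_combination -h10
  · intro h t ht z i j
    have hqt := hq t ht
    have hm : deriv (HMul.hMul (2:ℂ)) z = 2 := by
      simpa using ((hasDerivAt_id z).const_mul (2:ℂ)).deriv
    have hA10 : deriv (fun s => z ^ 2 - q s * z) t = -(deriv q t * z) := by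
      simpa using ((hasDerivAt_const t (z^2)).sub (hqt.hasDerivAt.mul_const z)).deriv
    fin_cases i <;> fin_cases j <;>
      simp only [RicA, RicB, Matrix.mul_apply, Fin.sum_univ_two] <;>
      simp [hm, hA10, h t ht] <;> ring
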